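/- Let B be an n×k real matrix, let ε, δ ∈ (0,1) with ε ≤ δ and δ < 1/2, and let μ > 0. Assume B satisfies the RIP over 𝓗 with constant ε and the R-RIP over 𝓗−𝓗 with parameter δ and precision μ. Let y̌ ∈ ℝ^k be nonzero, let ř be an ordered selection, let w ∈ ℝ^m, and let x̌ = S_ř B y̌ + w. Let η ≥ 1 and suppose (ŷ, r̂) merely satisfies the feasibility condition ‖S_r̂ B ŷ − x̌‖ ≤ η·‖w‖. Then d((ŷ,r̂),(y̌,ř)) ≤ χ·√m·‖y̌‖ with χ = max{ μ·√((1+ε)/(1−ε))·(1 + (η+1)·‖w‖/‖S_ř B y̌‖), (η+1)·‖w‖/(‖S_ř B y̌‖·√(1−2δ)) }. -/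

import Mathlib

/-!
Write `S = S_ř B y̌`, `T = S_r̂ B ŷ` and `e = (η + 1)‖w‖`; feasibility and the triangle inequality
give `‖T - S‖ ≤ e`. If the pair is far apart, `d ≥ μ · max(√m‖ŷ‖, √m‖y̌‖)`, the lower R-RIP bound
gives `√(1 - δ) · d ≤ e`, and the upper RIP bound `‖S‖ ≤ √(1 + ε) √m ‖y̌‖` together with
`(1 + ε)(1 - 2δ) ≤ 1 - δ` turns this into the second term of `χ`. Otherwise `d` is below
`μ · max(√m‖ŷ‖, √m‖y̌‖)`, and the lower RIP bound controls both norms by `(‖S‖ + e) / √(1 - ε)`,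
which the upper RIP bound turns into the first term of `χ`.
-/

/-- Apply the ordered-selection sampling: `(S_r B y) i = ⟨B_{r i}, y⟩`. -/
noncomputable def selApply {n k m : ℕ} (B : Matrix (Fin n) (Fin k) ℝ) (r : Fin m → Fin n)
    (y : EuclideanSpace ℝ (Fin k)) : EuclideanSpace ℝ (Fin m) :=
  WithLp.toLp 2 (fun i => ∑ j, B (r i) j * y j)

/-- Similarity count `c(r,r') = #{i : r i = r' i}`. -/
def simCount {n m : ℕ} (r r' : Fin m → Fin n) : ℕ :=
  (Finset.univ.filter (fun i => r i = r' i)).card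

/-- Distance `d((y,r),(y',r')) = √(m‖y‖² + m‖y'‖² − 2 c(r,r') ⟨y,y'⟩)`. -/
noncomputable def selDist {n k m : ℕ} (y y' : EuclideanSpace ℝ (Fin k))
    (r r' : Fin m → Fin n) : ℝ :=
  Real.sqrt ((m : ℝ) * ‖y‖ ^ 2 + (m : ℝ) * ‖y'‖ ^ 2
    - 2 * (simCount r r' : ℝ) * (inner ℝ y y' : ℝ))

/-- `B` satisfies the RIP over 𝓗 with constant `ε`. -/
def RIPoverH {n k m : ℕ} (B : Matrix (Fin n) (Fin k) ℝ) (ε : ℝ) : Prop :=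
  ∀ (y : EuclideanSpace ℝ (Fin k)) (r : Fin m → Fin n), StrictMono r →
    (1 - ε) * m * ‖y‖ ^ 2 ≤ ‖selApply B r y‖ ^ 2 ∧
    ‖selApply B r y‖ ^ 2 ≤ (1 + ε) * m * ‖y‖ ^ 2

/-- `B` satisfies the relaxed RIP over 𝓗−𝓗 with parameter `δ` and precision `μ`. -/
def RRIPoverHdiffH {n k m : ℕ} (B : Matrix (Fin n) (Fin k) ℝ) (δ μ : ℝ) : Prop :=
  ∀ (y y' : EuclideanSpace ℝ (Fin k)) (r r' : Fin m → Fin n),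
    StrictMono r → StrictMono r' →
    selDist y y' r r' ≥ μ * max (Real.sqrt m * ‖y‖) (Real.sqrt m * ‖y'‖) →
    (1 - δ) * (selDist y y' r r') ^ 2 ≤ ‖selApply B r y - selApply B r' y'‖ ^ 2 ∧
    ‖selApply B r y - selApply B r' y'‖ ^ 2 ≤ (1 + δ) * (selDist y y' r r') ^ 2


theorem sqrt_mul_natCast_mul_sq (c : ℝ) (m : ℕ) {t : ℝ} (ht : 0 ≤ t) :
    √(c * m * t ^ 2) = √c * (√m * t) := by
  rw [Real.sqrt_mul' _ (sq_nonneg t), Real.sqrt_mul' _ (Nat.cast_nonneg m), Real.sqrt_sq ht,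
    mul_assoc]

theorem sqrt_one_add_mul_sqrt_one_sub_two_mul_le {ε δ : ℝ} (hεδ : ε ≤ δ) (hδ : δ ≤ 1 / 2) :
    √(1 + ε) * √(1 - 2 * δ) ≤ √(1 - δ) := by
  rw [← Real.sqrt_mul' _ (by linarith)]
  have h := mul_le_mul_of_nonneg_right hεδ (by linarith : (0 : ℝ) ≤ 1 - 2 * δ)
  exact Real.sqrt_le_sqrt (by nlinarith [sq_nonneg δ])

theorem le_div_mul_of_one_sub_mul_sq_le {d e s N ε δ : ℝ} (hd : 0 ≤ d) (he : 0 ≤ e)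
    (hs : 0 < s) (hsN : s ≤ √(1 + ε) * N) (hεδ : ε ≤ δ) (hδ : δ < 1 / 2)
    (hsq : (1 - δ) * d ^ 2 ≤ e ^ 2) :
    d ≤ e / (s * √(1 - 2 * δ)) * N := by
  have hN : 0 ≤ N := by
    by_contra! hN
    nlinarith [Real.sqrt_nonneg (1 + ε)]
  have hde : d * √(1 - δ) ≤ e := by
    have h := Real.sqrt_le_sqrt hsq
    rwa [Real.sqrt_mul (by linarith), Real.sqrt_sq hd, Real.sqrt_sq he, mul_comm] at h
  rw [div_mul_eq_mul_div, le_div_iff₀ (mul_pos hs (Real.sqrt_pos.mpr (by linarith)))]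
  calc d * (s * √(1 - 2 * δ))
      ≤ d * (√(1 + ε) * √(1 - 2 * δ) * N) := by
        rw [mul_right_comm _ _ N]; gcongr
    _ ≤ d * (√(1 - δ) * N) := by
        gcongr; exact sqrt_one_add_mul_sqrt_one_sub_two_mul_le hεδ hδ.le
    _ ≤ e * N := by rw [← mul_assoc]; gcongr

theorem add_div_sqrt_one_sub_le {s e N ε : ℝ} (hs : 0 < s) (hsN : s ≤ √(1 + ε) * N)
    (hε : ε < 1) (he : 0 ≤ e) :
    (s + e) / √(1 - ε) ≤ √((1 + ε) / (1 - ε)) * (1 + e / s) * N := by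
  have hse : s + e = s * (1 + e / s) := by field_simp
  rw [Real.sqrt_div' _ (by linarith : 0 ≤ 1 - ε), hse, div_mul_eq_mul_div, div_mul_eq_mul_div,
    mul_right_comm]
  gcongr

namespace RIPoverH

variable {n k m : ℕ} {B : Matrix (Fin n) (Fin k) ℝ} {ε : ℝ} {r : Fin m → Fin n}

theorem norm_selApply_le (h : RIPoverH (m := m) B ε) (hr : StrictMono r)
    (y : EuclideanSpace ℝ (Fin k)) :
    ‖selApply B r y‖ ≤ √(1 + ε) * (√m * ‖y‖) := by
  rw [← sqrt_mul_natCast_mul_sq _ _ (norm_nonneg y), ← Real.sqrt_sq (norm_nonneg (selApply B r y))]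
  exact Real.sqrt_le_sqrt (h y r hr).2

theorem sqrt_mul_le_norm_selApply (h : RIPoverH (m := m) B ε) (hr : StrictMono r)
    (y : EuclideanSpace ℝ (Fin k)) :
    √(1 - ε) * (√m * ‖y‖) ≤ ‖selApply B r y‖ := by
  rw [← sqrt_mul_natCast_mul_sq _ _ (norm_nonneg y), ← Real.sqrt_sq (norm_nonneg (selApply B r y))]
  exact Real.sqrt_le_sqrt (h y r hr).1

theorem norm_selApply_pos (h : RIPoverH (m := m) B ε) (hr : StrictMono r) (hε : ε < 1)
    (hm : 0 < m) {y : EuclideanSpace ℝ (Fin k)} (hy : y ≠ 0) :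
    0 < ‖selApply B r y‖ :=
  (mul_pos (Real.sqrt_pos.mpr (by linarith))
    (mul_pos (Real.sqrt_pos.mpr (Nat.cast_pos.mpr hm)) (norm_pos_iff.mpr hy))).trans_le
    (h.sqrt_mul_le_norm_selApply hr y)

theorem sqrt_mul_norm_le_of_norm_sub_le (h : RIPoverH (m := m) B ε) (hr : StrictMono r)
    (hε : ε < 1) {y : EuclideanSpace ℝ (Fin k)} {v : EuclideanSpace ℝ (Fin m)} {e : ℝ}
    (hyv : ‖selApply B r y - v‖ ≤ e) :
    √m * ‖y‖ ≤ (‖v‖ + e) / √(1 - ε) := by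
  rw [le_div_iff₀ (Real.sqrt_pos.mpr (by linarith)), mul_comm]
  calc √(1 - ε) * (√m * ‖y‖) ≤ ‖selApply B r y‖ := h.sqrt_mul_le_norm_selApply hr y
    _ ≤ ‖v‖ + ‖selApply B r y - v‖ := norm_le_insert' _ _
    _ ≤ ‖v‖ + e := by gcongr

end RIPoverH

theorem recovery_guarantee_feasible_general {n k m : ℕ} (B : Matrix (Fin n) (Fin k) ℝ)
    (ε δ μ : ℝ) (hε1 : ε < 1)
    (hεδ : ε ≤ δ) (hδhalf : δ < 1 / 2) (hμ : 0 < μ)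
    (hRIP : RIPoverH (m := m) B ε) (hRRIP : RRIPoverHdiffH (m := m) B δ μ)
    (ychk : EuclideanSpace ℝ (Fin k)) (hychk : ychk ≠ 0)
    (rchk : Fin m → Fin n) (hrchk : StrictMono rchk)
    (w : EuclideanSpace ℝ (Fin m))
    (xchk : EuclideanSpace ℝ (Fin m)) (hxchk : xchk = selApply B rchk ychk + w)
    (yhat : EuclideanSpace ℝ (Fin k)) (rhat : Fin m → Fin n) (hrhat : StrictMono rhat)
    (η : ℝ)
    (hfeas : ‖selApply B rhat yhat - xchk‖ ≤ η * ‖w‖) :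
    selDist yhat ychk rhat rchk ≤
      max (μ * Real.sqrt ((1 + ε) / (1 - ε)) * (1 + (η + 1) * ‖w‖ / ‖selApply B rchk ychk‖))
          ((η + 1) * ‖w‖ / (‖selApply B rchk ychk‖ * Real.sqrt (1 - 2 * δ)))
        * Real.sqrt m * ‖ychk‖ := by
  obtain rfl | hm := m.eq_zero_or_pos
  · simp [selDist, simCount]
  subst hxchk
  set S := selApply B rchk ychk
  set T := selApply B rhat yhat
  set e := (η + 1) * ‖w‖
  have hTS : ‖T - S‖ ≤ e := calc
    ‖T - S‖ ≤ ‖T - (S + w)‖ + ‖S + w - S‖ := norm_sub_le_norm_sub_add_norm_sub _ _ _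
    _ ≤ η * ‖w‖ + ‖w‖ := by rw [add_sub_cancel_left]; gcongr
    _ = e := by ring
  have he : 0 ≤ e := (norm_nonneg _).trans hTS
  have hS : 0 < ‖S‖ := hRIP.norm_selApply_pos hrchk hε1 hm hychk
  have hSN := hRIP.norm_selApply_le hrchk ychk
  rw [mul_assoc (max _ _)]
  rcases le_or_gt (μ * max (√m * ‖yhat‖) (√m * ‖ychk‖)) (selDist yhat ychk rhat rchk)
    with hfar | hnear
  · have hsq : (1 - δ) * selDist yhat ychk rhat rchk ^ 2 ≤ e ^ 2 :=
      (hRRIP yhat ychk rhat rchk hrhat hrchk hfar).1.trans (by gcongr)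
    exact (le_div_mul_of_one_sub_mul_sq_le (Real.sqrt_nonneg _) he hS hSN hεδ hδhalf hsq).trans
      (by gcongr; exact le_max_right _ _)
  · have hmax : max (√m * ‖yhat‖) (√m * ‖ychk‖) ≤ (‖S‖ + e) / √(1 - ε) :=
      max_le (hRIP.sqrt_mul_norm_le_of_norm_sub_le hrhat hε1 hTS)
        (hRIP.sqrt_mul_norm_le_of_norm_sub_le hrchk hε1 (by rwa [sub_self, norm_zero]))
    calc selDist yhat ychk rhat rchk
        ≤ μ * ((‖S‖ + e) / √(1 - ε)) := hnear.le.trans (by gcongr)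
      _ ≤ μ * (√((1 + ε) / (1 - ε)) * (1 + e / ‖S‖) * (√m * ‖ychk‖)) := by
        gcongr; exact add_div_sqrt_one_sub_le hS hSN hε1 he
      _ = μ * √((1 + ε) / (1 - ε)) * (1 + e / ‖S‖) * (√m * ‖ychk‖) := by ring
      _ ≤ _ := by gcongr; exact le_max_left _ _

/-- Remark 2: recovery guarantee for any feasible estimate under RIP and R-RIP. -/
theorem recovery_guarantee_feasible {n k m : ℕ} (B : Matrix (Fin n) (Fin k) ℝ)
    (ε δ μ : ℝ) (hε0 : 0 < ε) (hε1 : ε < 1) (hδ0 : 0 < δ) (hδ1 : δ < 1)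
    (hεδ : ε ≤ δ) (hδhalf : δ < 1 / 2) (hμ : 0 < μ)
    (hRIP : RIPoverH (m := m) B ε) (hRRIP : RRIPoverHdiffH (m := m) B δ μ)
    (ychk : EuclideanSpace ℝ (Fin k)) (hychk : ychk ≠ 0)
    (rchk : Fin m → Fin n) (hrchk : StrictMono rchk)
    (w : EuclideanSpace ℝ (Fin m))
    (xchk : EuclideanSpace ℝ (Fin m)) (hxchk : xchk = selApply B rchk ychk + w)
    (yhat : EuclideanSpace ℝ (Fin k)) (rhat : Fin m → Fin n) (hrhat : StrictMono rhat)
    (η : ℝ) (hη : 1 ≤ η)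
    (hfeas : ‖selApply B rhat yhat - xchk‖ ≤ η * ‖w‖) :
    selDist yhat ychk rhat rchk ≤
      max (μ * Real.sqrt ((1 + ε) / (1 - ε)) * (1 + (η + 1) * ‖w‖ / ‖selApply B rchk ychk‖))
          ((η + 1) * ‖w‖ / (‖selApply B rchk ychk‖ * Real.sqrt (1 - 2 * δ)))
        * Real.sqrt m * ‖ychk‖ :=
  recovery_guarantee_feasible_general B ε δ μ hε1 hεδ hδhalf hμ hRIP hRRIP ychk hychk rchk hrchk w
    xchk hxchk yhat rhat hrhat η hfeas
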